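/- For all n ≥ 0, a_1(7n+5) ≡ 0 (mod 7), where a_1(n) = p(n) is the ordinary partition function with generating function 1/(q;q)_∞. -/

import Mathlib

/-- Truncated product `∏_{j=1}^{N} (1 - q^{j})`, approximating `(q;q)_∞`. -/
noncomputable def etaTrunc (N : ℕ) : PowerSeries ℤ :=
  ∏ j ∈ Finset.range N, (1 - (PowerSeries.X : PowerSeries ℤ) ^ (j + 1))

/-- `a` has generating function `1/(q;q)_∞`, i.e. `a = p`, the partition function. -/
def IsPartitionGF (a : ℕ → ℤ) : Prop :=
  ∀ N n : ℕ, n ≤ N →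
    PowerSeries.coeff n (etaTrunc N * PowerSeries.mk a) =
    PowerSeries.coeff n (1 : PowerSeries ℤ)

/-!
Modulo 7 we have `(q;q)^7 = (q^7;q^7)`, so `∑ p(n) q^n ≡ (q;q)^6 / (q^7;q^7)` and the
coefficient of `q^(7n+5)` is a sum of coefficients of `(q;q)^6 = ((q;q)^3)^2` at exponents
`≡ 5 (mod 7)`. By Jacobi's identity `(q;q)^3 = ∑ (-1)^j (2j+1) q^(T j)` with `T j = j(j+1)/2`. Since
`8 T j + 1 = (2j+1)^2`, two triangular numbers with `T j + T j' ≡ 5` give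
`(2j+1)^2 + (2j'+1)^2 ≡ 0 (mod 7)`, and as `-1` is not a square mod 7 this forces `7 ∣ 2j+1`.

Jacobi's identity is proved modulo `q^(m+1)` by differentiating at `z = 1` the finite triple
product `∏_{j<n} (1 - q^(j+1) z)(z - q^j) = ∑_k (-1)^(n+k) q^(T (k-n)) [2n choose k]_q z^k`, where
`T (-j) = T (j-1)`: for `n > 2m` the Gaussian binomials that survive truncation are all
`≡ 1 / (q;q)_∞ (mod q^(m+1))`, and the weights `k` pair up as `(n+j) - (n-1-j) = 2j+1`.
-/

open PowerSeries Finset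

namespace PowerSeries

variable {R : Type*} [CommRing R]

lemma mk_eq_mk_iff_coeff_eq {L : ℕ} {F G : R⟦X⟧} :
    Ideal.Quotient.mk (Ideal.span {X ^ L}) F = Ideal.Quotient.mk (Ideal.span {X ^ L}) G ↔
      ∀ i < L, coeff i F = coeff i G := by
  simp only [Ideal.Quotient.eq, Ideal.mem_span_singleton, X_pow_dvd_iff, map_sub, sub_eq_zero]

lemma mk_X_pow_eq_zero {L e : ℕ} (h : L ≤ e) :
    Ideal.Quotient.mk (Ideal.span {X ^ L}) (X ^ e : R⟦X⟧) = 0 :=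
  Ideal.Quotient.eq_zero_iff_mem.mpr (Ideal.mem_span_singleton.mpr (pow_dvd_pow X h))

lemma coeff_mul_expand_eq_zero {p : ℕ} (hp : p ≠ 0) {F : R⟦X⟧} (G : R⟦X⟧) {m : ℕ}
    (hF : ∀ i ≤ m, i % p = m % p → coeff i F = 0) : coeff m (F * expand p hp G) = 0 := by
  rw [coeff_mul]
  refine sum_eq_zero fun ⟨i, j⟩ hij => ?_
  rw [HasAntidiagonal.mem_antidiagonal] at hij
  dsimp only
  by_cases hj : p ∣ j
  · obtain ⟨c, rfl⟩ := hj
    rw [hF i (by omega) (by rw [← hij, Nat.add_mul_mod_self_left]), zero_mul]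
  · rw [coeff_expand_of_not_dvd p hp G hj, mul_zero]

end PowerSeries

lemma sum_range_two_mul_add_one {M : Type*} [AddCommMonoid M] (f : ℕ → M) (n : ℕ) :
    ∑ k ∈ range (2 * n + 1), f k
      = ∑ j ∈ range n, (f (n - 1 - j) + f (n + j)) + f (2 * n) := by
  rw [sum_range_succ, two_mul, sum_range_add, ← sum_range_reflect f n, sum_add_distrib]

def triangle : ℕ → ℕ
  | 0 => 0
  | n + 1 => triangle n + n + 1

lemma triangle_succ (n : ℕ) : triangle (n + 1) = triangle n + n + 1 := rfl

lemma le_triangle (n : ℕ) : n ≤ triangle n := by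
  induction n with
  | zero => rfl
  | succ n ih => rw [triangle_succ]; omega

lemma two_mul_add_one_sq (n : ℕ) : (2 * n + 1) ^ 2 = 8 * triangle n + 1 := by
  induction n with
  | zero => rfl
  | succ n ih => rw [triangle_succ]; nlinarith

-- `T (k - n)` in the notation above
def tripleExp (n k : ℕ) : ℕ := if n ≤ k then triangle (k - n) else triangle (n - k - 1)

lemma tripleExp_succ_succ (n k : ℕ) : tripleExp (n + 1) (k + 1) = tripleExp n k := by
  simp only [tripleExp, Nat.add_le_add_iff_right, Nat.add_sub_add_right]

lemma tripleExp_add_succ (n k : ℕ) : tripleExp n k + k + 1 = n + tripleExp n (k + 1) := by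
  unfold tripleExp
  split_ifs with h h' h'
  · rw [show k + 1 - n = k - n + 1 by omega, triangle_succ]; omega
  · omega
  · obtain rfl : n = k + 1 := by omega
    simp [triangle]
  · rw [show n - k - 1 = n - (k + 1) - 1 + 1 by omega, triangle_succ]; omega

lemma le_of_tripleExp_le {n k m : ℕ} (h : tripleExp n k ≤ m) :
    n ≤ k + m + 1 ∧ k ≤ n + m := by
  unfold tripleExp at h
  split_ifs at h
  · have := le_triangle (k - n); omega
  · have := le_triangle (n - k - 1); omega

lemma etaTrunc_succ (N : ℕ) : etaTrunc (N + 1) = etaTrunc N * (1 - X ^ (N + 1)) :=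
  prod_range_succ _ _

lemma isUnit_etaTrunc (N : ℕ) : IsUnit (etaTrunc N) := by
  simp [isUnit_iff_constantCoeff, etaTrunc]

noncomputable def gaussBinom : ℕ → ℕ → ℤ⟦X⟧
  | _, 0 => 1
  | 0, _ + 1 => 0
  | n + 1, k + 1 => gaussBinom n (k + 1) + X ^ (n - k) * gaussBinom n k

@[simp] lemma gaussBinom_zero_right (n : ℕ) : gaussBinom n 0 = 1 := by cases n <;> rfl

lemma gaussBinom_succ_succ (n k : ℕ) :
    gaussBinom (n + 1) (k + 1) = gaussBinom n (k + 1) + X ^ (n - k) * gaussBinom n k := rfl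

lemma gaussBinom_eq_zero_of_lt {n k : ℕ} (h : n < k) : gaussBinom n k = 0 := by
  induction n generalizing k with
  | zero => obtain ⟨k, rfl⟩ := Nat.exists_eq_add_one.mpr h; rfl
  | succ n ih =>
    obtain ⟨k, rfl⟩ := Nat.exists_eq_add_one.mpr (Nat.zero_lt_of_lt h)
    rw [gaussBinom_succ_succ, ih (by omega), ih (by omega), mul_zero, add_zero]

@[simp] lemma gaussBinom_self (n : ℕ) : gaussBinom n n = 1 := by
  induction n with
  | zero => rfl
  | succ n ih => rw [gaussBinom_succ_succ, gaussBinom_eq_zero_of_lt n.lt_succ_self, ih]; simp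

lemma gaussBinom_add_mul_etaTrunc_mul_etaTrunc (k l : ℕ) :
    gaussBinom (k + l) k * (etaTrunc k * etaTrunc l) = etaTrunc (k + l) := by
  induction k generalizing l with
  | zero => simp [etaTrunc]
  | succ k ihk =>
    induction l with
    | zero => simp [etaTrunc]
    | succ l ihl =>
      have hpascal : gaussBinom (k + 1 + (l + 1)) (k + 1)
          = gaussBinom (k + l + 1) (k + 1) + X ^ (l + 1) * gaussBinom (k + l + 1) k := by
        rw [show k + 1 + (l + 1) = k + l + 1 + 1 by ring, gaussBinom_succ_succ,
          show k + l + 1 - k = l + 1 by omega]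
      have ihk' := ihk (l + 1)
      rw [show k + 1 + l = k + l + 1 by ring, etaTrunc_succ k] at ihl
      rw [etaTrunc_succ l, show k + (l + 1) = k + l + 1 by ring] at ihk'
      rw [hpascal, etaTrunc_succ k, etaTrunc_succ l, show k + 1 + (l + 1) = k + l + 1 + 1 by ring,
        etaTrunc_succ (k + l + 1)]
      linear_combination (1 - X ^ (l + 1)) * ihl + X ^ (l + 1) * (1 - X ^ (k + 1)) * ihk'

lemma gaussBinom_succ_succ' (n k : ℕ) :
    gaussBinom (n + 1) (k + 1) = X ^ (k + 1) * gaussBinom n (k + 1) + gaussBinom n k := by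
  rcases lt_trichotomy n k with h | rfl | h
  · simp [gaussBinom_eq_zero_of_lt, h, Nat.lt_succ_of_lt h]
  · simp [gaussBinom_eq_zero_of_lt]
  obtain ⟨l, rfl⟩ := Nat.exists_eq_add_of_lt h
  refine ((isUnit_etaTrunc (k + 1)).mul (isUnit_etaTrunc (l + 1))).mul_left_cancel ?_
  have h1 := gaussBinom_add_mul_etaTrunc_mul_etaTrunc (k + 1) (l + 1)
  have h2 := gaussBinom_add_mul_etaTrunc_mul_etaTrunc (k + 1) l
  have h3 := gaussBinom_add_mul_etaTrunc_mul_etaTrunc k (l + 1)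
  rw [show k + 1 + (l + 1) = k + l + 1 + 1 by ring] at h1
  rw [show k + 1 + l = k + l + 1 by ring] at h2
  rw [show k + (l + 1) = k + l + 1 by ring] at h3
  simp only [etaTrunc_succ] at h1 h2 h3 ⊢
  linear_combination h1 - X ^ (k + 1) * (1 - X ^ (l + 1)) * h2 - (1 - X ^ (k + 1)) * h3

lemma gaussBinom_add_two_succ_succ {N k : ℕ} (hk : k ≤ N) :
    gaussBinom (N + 2) (k + 2) = X ^ (k + 2) * gaussBinom N (k + 2)
      + (1 + X ^ (N + 1)) * gaussBinom N (k + 1) + X ^ (N - k) * gaussBinom N k := by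
  rw [gaussBinom_succ_succ, show N + 1 - (k + 1) = N - k by omega, gaussBinom_succ_succ',
    gaussBinom_succ_succ']
  have hX : (X : ℤ⟦X⟧) ^ (N - k) * X ^ (k + 1) = X ^ (N + 1) := by
    rw [← pow_add]
    congr 1
    omega
  linear_combination gaussBinom N (k + 1) * hX

lemma gaussBinom_add_two_one (N : ℕ) :
    gaussBinom (N + 2) 1 = X * gaussBinom N 1 + (1 + X ^ (N + 1)) := by
  rw [gaussBinom_succ_succ, gaussBinom_succ_succ', Nat.sub_zero]
  simp only [gaussBinom_zero_right]
  ring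

noncomputable def tripleMonomial (n k : ℕ) : ℤ⟦X⟧ := (-1) ^ (n + k) * X ^ tripleExp n k

noncomputable def tripleCoeff (n k : ℕ) : ℤ⟦X⟧ := tripleMonomial n k * gaussBinom (2 * n) k

lemma tripleCoeff_succ_zero (n : ℕ) : tripleCoeff (n + 1) 0 = tripleCoeff n 0 * -X ^ n := by
  have he : tripleExp (n + 1) 0 = tripleExp n 0 + n := by
    have := tripleExp_add_succ (n + 1) 0
    rw [tripleExp_succ_succ] at this
    omega
  simp only [tripleCoeff, tripleMonomial, he, pow_add, gaussBinom_zero_right]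
  ring

lemma tripleCoeff_succ_one (n : ℕ) :
    tripleCoeff (n + 1) 1 = tripleCoeff n 1 * -X ^ n + tripleCoeff n 0 * (1 + X ^ (2 * n + 1)) := by
  have he : (X : ℤ⟦X⟧) ^ tripleExp n 0 * X = X ^ n * X ^ tripleExp n 1 := by
    rw [← pow_succ, ← pow_add, ← tripleExp_add_succ]
  simp only [tripleCoeff, tripleMonomial, tripleExp_succ_succ, show 2 * (n + 1) = 2 * n + 2 by ring,
    gaussBinom_add_two_one, gaussBinom_zero_right]
  linear_combination (-1) ^ n * gaussBinom (2 * n) 1 * he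

lemma tripleCoeff_succ_add_two (n k : ℕ) :
    tripleCoeff (n + 1) (k + 2) = tripleCoeff n (k + 2) * -X ^ n
      + tripleCoeff n (k + 1) * (1 + X ^ (2 * n + 1)) + tripleCoeff n k * -X ^ (n + 1) := by
  rcases lt_or_ge (2 * n) k with hk | hk
  · simp [tripleCoeff, gaussBinom_eq_zero_of_lt, hk, Nat.lt_succ_of_lt hk,
      show 2 * n < k + 2 by omega, show 2 * (n + 1) < k + 2 by omega]
  have he₁ :
      (X : ℤ⟦X⟧) ^ tripleExp n (k + 1) * X ^ (k + 2) = X ^ n * X ^ tripleExp n (k + 2) := by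
    rw [← pow_add, ← pow_add, ← tripleExp_add_succ, add_assoc]
  have he₂ : (X : ℤ⟦X⟧) ^ tripleExp n (k + 1) * X ^ (2 * n - k)
      = X ^ (n + 1) * X ^ tripleExp n k := by
    rw [← pow_add, ← pow_add]
    have := tripleExp_add_succ n k
    congr 1
    omega
  simp only [tripleCoeff, tripleMonomial, show 2 * (n + 1) = 2 * n + 2 by ring,
    show tripleExp (n + 1) (k + 2) = tripleExp n (k + 1) from tripleExp_succ_succ n (k + 1),
    gaussBinom_add_two_succ_succ hk]
  linear_combination
    (-1) ^ (n + k + 1) * (gaussBinom (2 * n) (k + 2) * he₁ + gaussBinom (2 * n) k * he₂)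

noncomputable def triplePoly (n : ℕ) : Polynomial ℤ⟦X⟧ :=
  ∑ k ∈ range (2 * n + 1), Polynomial.C (tripleCoeff n k) * Polynomial.X ^ k

lemma coeff_triplePoly (n k : ℕ) : (triplePoly n).coeff k = tripleCoeff n k := by
  simp only [triplePoly, Polynomial.finsetSum_coeff, Polynomial.coeff_C_mul_X_pow, sum_ite_eq,
    mem_range]
  split_ifs with h
  · rfl
  · simp [tripleCoeff, gaussBinom_eq_zero_of_lt (show 2 * n < k by omega)]

noncomputable def tripleFactor (j : ℕ) : Polynomial ℤ⟦X⟧ :=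
  (1 - Polynomial.C (X ^ (j + 1)) * Polynomial.X) * (Polynomial.X - Polynomial.C (X ^ j))

lemma triplePoly_succ (n : ℕ) : triplePoly (n + 1) = triplePoly n * tripleFactor n := by
  have hfactor : tripleFactor n = Polynomial.C (-X ^ n)
      + Polynomial.C (1 + X ^ (2 * n + 1)) * Polynomial.X
      + Polynomial.C (-X ^ (n + 1)) * Polynomial.X * Polynomial.X := by
    simp only [tripleFactor, map_neg, map_add, map_one, map_pow]
    ring
  rw [hfactor, mul_add, mul_add, ← mul_assoc, ← mul_assoc, ← mul_assoc]
  ext j : 1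
  rcases j with _ | _ | k <;>
    simp only [Polynomial.coeff_add, Polynomial.coeff_mul_C, Polynomial.coeff_mul_X,
      Polynomial.coeff_mul_X_zero, coeff_triplePoly, tripleCoeff_succ_zero, tripleCoeff_succ_one,
      tripleCoeff_succ_add_two, zero_add, add_zero]

theorem prod_tripleFactor (n : ℕ) : ∏ j ∈ range n, tripleFactor j = triplePoly n := by
  induction n with
  | zero => simp [triplePoly, tripleCoeff, tripleMonomial, tripleExp, triangle]
  | succ n ih => rw [prod_range_succ, ih, triplePoly_succ]

theorem etaTrunc_succ_mul_etaTrunc (N : ℕ) :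
    etaTrunc (N + 1) * etaTrunc N
      = ∑ k ∈ range (2 * (N + 1) + 1), (k : ℤ⟦X⟧) * tripleCoeff (N + 1) k := by
  have h := congrArg (fun p => (Polynomial.derivative p).eval 1) (prod_tripleFactor (N + 1))
  simp only [prod_range_succ' _ N, triplePoly, tripleFactor, Polynomial.derivative_mul,
    Polynomial.derivative_sum, Polynomial.derivative_X_pow, Polynomial.eval_finsetSum,
    Polynomial.eval_add, Polynomial.eval_mul, Polynomial.eval_sub, Polynomial.eval_prod,
    Polynomial.eval_C, Polynomial.eval_X, Polynomial.eval_one, Polynomial.eval_pow,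
    Polynomial.derivative_sub, Polynomial.derivative_one, Polynomial.derivative_X,
    Polynomial.derivative_C, one_pow, mul_one, zero_mul, zero_sub, sub_zero,
    zero_add, prod_mul_distrib, mul_comm (tripleCoeff _ _)] at h
  rw [etaTrunc, etaTrunc, prod_range_succ' _ N, ← h]
  ring

noncomputable def etaCubeSum (L : ℕ) : ℤ⟦X⟧ :=
  ∑ j ∈ range L, C ((-1) ^ j * (2 * j + 1 : ℤ)) * X ^ triangle j

lemma sum_natCast_mul_tripleMonomial (n : ℕ) :
    ∑ k ∈ range (2 * n + 1), (k : ℤ⟦X⟧) * tripleMonomial n k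
      = etaCubeSum n + ((2 * n : ℕ) : ℤ⟦X⟧) * tripleMonomial n (2 * n) := by
  rw [sum_range_two_mul_add_one, etaCubeSum]
  congr 1
  refine sum_congr rfl fun j hj => ?_
  obtain ⟨d, rfl⟩ : ∃ d, n = j + 1 + d := ⟨n - (j + 1), by have := mem_range.mp hj; omega⟩
  have he₁ : tripleExp (j + 1 + d) (j + 1 + d - 1 - j) = triangle j := by
    rw [tripleExp, if_neg (by omega)]; congr 1; omega
  have he₂ : tripleExp (j + 1 + d) (j + 1 + d + j) = triangle j := by
    rw [tripleExp, if_pos (by omega)]; congr 1; omega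
  have hs₁ : (-1 : ℤ⟦X⟧) ^ (j + 1 + d + (j + 1 + d - 1 - j)) = -(-1) ^ j := by
    rw [show j + 1 + d + (j + 1 + d - 1 - j) = j + 1 + 2 * d by omega, pow_add, pow_mul]
    simp [pow_succ]
  have hs₂ : (-1 : ℤ⟦X⟧) ^ (j + 1 + d + (j + 1 + d + j)) = (-1) ^ j := by
    rw [show j + 1 + d + (j + 1 + d + j) = j + 2 * (j + 1 + d) by omega, pow_add, pow_mul]
    simp
  rw [tripleMonomial, tripleMonomial, he₁, he₂, hs₁, hs₂,
    show j + 1 + d - 1 - j = d by omega]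
  simp only [map_mul, map_pow, map_neg, map_one, map_add, map_ofNat, map_natCast]
  push_cast
  ring

local notation:max "π[" L "]" => Ideal.Quotient.mk (Ideal.span {(X : ℤ⟦X⟧) ^ L})

section JacobiModXPow

variable {m n : ℕ}

lemma mk_etaTrunc_of_le {k : ℕ} (h : m ≤ k) :
    π[m + 1] (etaTrunc k) = π[m + 1] (etaTrunc m) := by
  induction k, h using Nat.le_induction with
  | base => rfl
  | succ k hk ih =>
    rw [etaTrunc_succ, map_mul, ih, map_sub, map_one, mk_X_pow_eq_zero (by omega), sub_zero,
      mul_one]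

lemma mk_tripleMonomial_eq_zero {k : ℕ} (h : m < tripleExp n k) :
    π[m + 1] (tripleMonomial n k) = 0 := by
  rw [tripleMonomial, map_mul, mk_X_pow_eq_zero h, mul_zero]

lemma mk_gaussBinom_mul_mk_etaTrunc (hn : 2 * m < n) {k : ℕ} (hk : tripleExp n k ≤ m) :
    π[m + 1] (gaussBinom (2 * n) k) * π[m + 1] (etaTrunc m) = 1 := by
  obtain ⟨hk₁, hk₂⟩ := le_of_tripleExp_le hk
  obtain ⟨l, hl⟩ : ∃ l, 2 * n = k + l := ⟨2 * n - k, by omega⟩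
  have h := congrArg π[m + 1] (gaussBinom_add_mul_etaTrunc_mul_etaTrunc k l)
  rw [← hl, map_mul, map_mul, mk_etaTrunc_of_le (k := k) (by omega),
    mk_etaTrunc_of_le (k := l) (by omega), mk_etaTrunc_of_le (k := 2 * n) (by omega)] at h
  exact ((isUnit_etaTrunc m).map _).mul_left_cancel (by linear_combination h)

lemma mk_natCast_mul_tripleCoeff_mul_mk_etaTrunc (hn : 2 * m < n) (k : ℕ) :
    π[m + 1] ((k : ℤ⟦X⟧) * tripleCoeff n k) * π[m + 1] (etaTrunc m)
      = π[m + 1] ((k : ℤ⟦X⟧) * tripleMonomial n k) := by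
  rw [tripleCoeff, map_mul, map_mul, map_mul]
  rcases le_or_gt (tripleExp n k) m with hk | hk
  · linear_combination π[m + 1] k * π[m + 1] (tripleMonomial n k)
      * mk_gaussBinom_mul_mk_etaTrunc hn hk
  · simp only [mk_tripleMonomial_eq_zero hk, mul_zero, zero_mul]

lemma mk_sum_natCast_mul_tripleMonomial (hn : m < n) :
    π[m + 1] (∑ k ∈ range (2 * n + 1), (k : ℤ⟦X⟧) * tripleMonomial n k)
      = π[m + 1] (etaCubeSum (m + 1)) := by
  have htail : m < tripleExp n (2 * n) := by
    by_contra! h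
    have := le_of_tripleExp_le h
    omega
  rw [sum_natCast_mul_tripleMonomial, map_add, map_mul, mk_tripleMonomial_eq_zero htail,
    mul_zero, add_zero, etaCubeSum, etaCubeSum, map_sum, map_sum]
  refine (sum_subset (range_subset_range.mpr (by omega)) fun j _ hj => ?_).symm
  have hj : m + 1 ≤ triangle j := by have := le_triangle j; rw [mem_range] at hj; omega
  rw [map_mul, mk_X_pow_eq_zero hj, mul_zero]

theorem mk_etaTrunc_pow_three {M : ℕ} (hM : m ≤ M) :
    π[m + 1] (etaTrunc M ^ 3) = π[m + 1] (etaCubeSum (m + 1)) := by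
  have h := congrArg π[m + 1] (etaTrunc_succ_mul_etaTrunc (2 * m))
  rw [map_mul, mk_etaTrunc_of_le (k := 2 * m + 1) (by omega),
    mk_etaTrunc_of_le (k := 2 * m) (by omega), map_sum] at h
  calc π[m + 1] (etaTrunc M ^ 3) = π[m + 1] (etaTrunc m) ^ 2 * π[m + 1] (etaTrunc m) := by
        rw [map_pow, mk_etaTrunc_of_le hM]; ring
    _ = π[m + 1] (∑ k ∈ range (2 * (2 * m + 1) + 1),
          (k : ℤ⟦X⟧) * tripleMonomial (2 * m + 1) k) := by
        rw [sq, h, sum_mul, map_sum]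
        exact sum_congr rfl fun k _ => mk_natCast_mul_tripleCoeff_mul_mk_etaTrunc (by omega) k
    _ = π[m + 1] (etaCubeSum (m + 1)) := mk_sum_natCast_mul_tripleMonomial (by omega)

end JacobiModXPow

theorem coeff_etaTrunc_pow_three {m M : ℕ} (hM : m ≤ M) :
    coeff m (etaTrunc M ^ 3)
      = ∑ j ∈ range (m + 1), if m = triangle j then (-1) ^ j * (2 * j + 1 : ℤ) else 0 := by
  rw [mk_eq_mk_iff_coeff_eq.mp (mk_etaTrunc_pow_three hM) m m.lt_succ_self, etaCubeSum, map_sum]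
  simp only [coeff_C_mul_X_pow]

lemma seven_dvd_two_mul_add_one {l l' : ℕ} (h : (triangle l + triangle l') % 7 = 5) :
    7 ∣ 2 * l + 1 := by
  have hsq : (2 * l + 1) ^ 2 + (2 * l' + 1) ^ 2
      = 7 * (8 * ((triangle l + triangle l') / 7) + 6) := by
    rw [two_mul_add_one_sq, two_mul_add_one_sq]
    omega
  have : Fact (Nat.Prime 7) := ⟨by norm_num⟩
  rw [← ZMod.natCast_eq_zero_iff]
  by_contra hne
  have hsq7 := congrArg (Nat.cast : ℕ → ZMod 7) hsq
  rw [Nat.cast_mul, ZMod.natCast_self, zero_mul] at hsq7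
  push_cast at hsq7 hne
  exact ZMod.mod_four_ne_three_of_sq_eq_neg_sq' (x := 2 * (l' : ZMod 7) + 1) hne
    (by linear_combination hsq7) rfl

lemma seven_dvd_coeff_etaTrunc_pow_six {i M : ℕ} (hi : i ≤ M) (h7 : i % 7 = 5) :
    (7 : ℤ) ∣ coeff i (etaTrunc M ^ 6) := by
  rw [show etaTrunc M ^ 6 = etaTrunc M ^ 3 * etaTrunc M ^ 3 by ring, coeff_mul]
  refine dvd_sum fun ⟨u, v⟩ huv => ?_
  rw [HasAntidiagonal.mem_antidiagonal] at huv
  dsimp only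
  rw [coeff_etaTrunc_pow_three (by omega), coeff_etaTrunc_pow_three (by omega), sum_mul_sum]
  refine dvd_sum fun l _ => dvd_sum fun l' _ => ?_
  split_ifs with hl hl'
  · have h := seven_dvd_two_mul_add_one (l := l) (l' := l') (by omega)
    exact ((Int.natCast_dvd_natCast.mpr h).mul_left _).mul_right _
  all_goals simp

lemma map_etaTrunc_pow_prime (p : ℕ) [hp : Fact p.Prime] (N : ℕ) :
    map (Int.castRingHom (ZMod p)) (etaTrunc N) ^ p
      = expand p hp.out.ne_zero (map (Int.castRingHom (ZMod p)) (etaTrunc N)) := by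
  have : CharP (ZMod p)⟦X⟧ p := charP_of_injective_algebraMap C_injective p
  simp only [etaTrunc, map_prod, map_sub, map_one, map_pow, map_X, expand_X, ← prod_pow,
    sub_pow_char, one_pow, ← pow_mul, mul_comm]

theorem stmt_2 (a : ℕ → ℤ) (ha : IsPartitionGF a) :
    ∀ n : ℕ, (7 : ℤ) ∣ a (7 * n + 5) := by
  intro n
  have : Fact (Nat.Prime 7) := ⟨by norm_num⟩
  set m := 7 * n + 5
  set σ := Int.castRingHom (ZMod 7)
  set π := Ideal.Quotient.mk (Ideal.span {(X : (ZMod 7)⟦X⟧) ^ (m + 1)})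
  set η := map σ (etaTrunc m)
  set A := map σ (mk a)
  obtain ⟨G, hG⟩ := ((isUnit_etaTrunc m).map (map σ)).exists_right_inv
  have hηA : π (η * A) = π 1 := mk_eq_mk_iff_coeff_eq.mpr fun i hi => by
    rw [← map_mul, coeff_map, ha m i (by omega), ← coeff_map, map_one]
  have hfrob : π (η ^ 7 * expand 7 (by norm_num) G) = π 1 := by
    rw [map_etaTrunc_pow_prime, ← map_mul, hG, map_one]
  have hA : π A = π (η ^ 6 * expand 7 (by norm_num) G) := by
    simp only [map_mul, map_pow, map_one] at hηA hfrob ⊢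
    linear_combination (-π A) * hfrob + π η ^ 6 * π (expand 7 _ G) * hηA
  have hm := mk_eq_mk_iff_coeff_eq.mp hA m m.lt_succ_self
  rw [coeff_mul_expand_eq_zero _ _ fun i hi hi7 => ?_, coeff_map, coeff_mk] at hm
  · exact (ZMod.intCast_zmod_eq_zero_iff_dvd _ 7).mp hm
  · rw [← map_pow, coeff_map]
    exact (ZMod.intCast_zmod_eq_zero_iff_dvd _ 7).mpr
      (seven_dvd_coeff_etaTrunc_pow_six hi (by omega))
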